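/- arXiv:1512.02880 — 6 statements merged into one kernel-verified Lean document; each statement's English description precedes it below -/
import Mathlib

section
/- Let F be an algebraically closed field of characteristic 0. The set of common zeros (a,b,c) ∈ F³ of the polynomials a³−ab, a²b−ac, a²c+a², ab²−bc, b³+ab, b²c+b², ac²+ac, bc²+bc, c³+c² is exactly {(0,0,0), (0,0,−1), (−1,1,−1), (α,α²,−1), (α⁻¹,α⁻²,−1)} where α is a primitive 6th root of unity (α²−α+1=0); in particular this set has exactly 5 elements. -/
/-!
The last equation gives `c ∈ {0, -1}`. For `c = 0`, the equations `a²c + a²` and `b²c + b²`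
force `a = b = 0`. For `c = -1`, the equations `a³ - ab` and `ab² - bc` force `b = a²`, after
which `a²b - ac` reads `a⁴ + a = 0`. Since `α⁻¹ = 1 - α`, this quartic factors as
`a (a + 1) (a - α) (a - α⁻¹)`, and its four roots are distinct because `α = -1` would give `3 = 0`.
-/

section

variable {R : Type*} [CommRing R] [NoZeroDivisors R]

lemma rank1_equations_iff {a b c : R} :
      (a ^ 3 - a * b = 0 ∧
      a ^ 2 * b - a * c = 0 ∧
      a ^ 2 * c + a ^ 2 = 0 ∧
      a * b ^ 2 - b * c = 0 ∧
      b ^ 3 + a * b = 0 ∧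
      b ^ 2 * c + b ^ 2 = 0 ∧
      a * c ^ 2 + a * c = 0 ∧
      b * c ^ 2 + b * c = 0 ∧
      c ^ 3 + c ^ 2 = 0) ↔
    (a, b, c) = (0, 0, 0) ∨ (b = a ^ 2 ∧ c = -1 ∧ a ^ 4 + a = 0) := by
  constructor
  · rintro ⟨h1, h2, h3, h4, -, h6, -, -, h9⟩
    have hc : c ^ 2 * (c + 1) = 0 := by linear_combination h9
    rcases mul_eq_zero.mp hc with hc | hc
    · obtain rfl : c = 0 := pow_eq_zero_iff two_ne_zero |>.mp hc
      have ha : a = 0 := pow_eq_zero_iff two_ne_zero |>.mp (by linear_combination h3)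
      have hb : b = 0 := pow_eq_zero_iff two_ne_zero |>.mp (by linear_combination h6)
      simp [ha, hb]
    · obtain rfl : c = -1 := by linear_combination hc
      obtain rfl : b = a ^ 2 := by
        rcases mul_eq_zero.mp (show a * (a ^ 2 - b) = 0 by linear_combination h1) with rfl | h
        · linear_combination h4
        · linear_combination -h
      exact Or.inr ⟨rfl, rfl, by linear_combination h2⟩
  · rintro (h | ⟨rfl, rfl, h⟩)
    · simp_all
    · refine ⟨by ring, ?_, by ring, ?_, ?_, by ring, by ring, by ring, by ring⟩
      · linear_combination h
      · linear_combination a * h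
      · linear_combination a ^ 2 * h

lemma setOf_rank1_equations :
    {p : R × R × R |
      p.1 ^ 3 - p.1 * p.2.1 = 0 ∧
      p.1 ^ 2 * p.2.1 - p.1 * p.2.2 = 0 ∧
      p.1 ^ 2 * p.2.2 + p.1 ^ 2 = 0 ∧
      p.1 * p.2.1 ^ 2 - p.2.1 * p.2.2 = 0 ∧
      p.2.1 ^ 3 + p.1 * p.2.1 = 0 ∧
      p.2.1 ^ 2 * p.2.2 + p.2.1 ^ 2 = 0 ∧
      p.1 * p.2.2 ^ 2 + p.1 * p.2.2 = 0 ∧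
      p.2.1 * p.2.2 ^ 2 + p.2.1 * p.2.2 = 0 ∧
      p.2.2 ^ 3 + p.2.2 ^ 2 = 0} =
    insert (0, 0, 0) ((fun x => (x, x ^ 2, -1)) '' {x | x ^ 4 + x = 0}) := by
  ext ⟨a, b, c⟩
  simp only [Set.mem_ofPred_eq, rank1_equations_iff, Set.mem_insert_iff, Set.mem_image,
    Prod.mk.injEq]
  constructor
  · rintro (h | ⟨rfl, rfl, h⟩)
    · exact Or.inl h
    · exact Or.inr ⟨a, h, rfl, rfl, rfl⟩
  · rintro (h | ⟨x, h, rfl, rfl, rfl⟩)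
    · exact Or.inl h
    · exact Or.inr ⟨rfl, rfl, h⟩

end

section

variable {F : Type*} [Field F] {α : F}

lemma ne_zero_of_sq_sub_add_one_eq_zero (hα : α ^ 2 - α + 1 = 0) : α ≠ 0 := by
  rintro rfl
  norm_num at hα

lemma inv_eq_one_sub_of_sq_sub_add_one_eq_zero (hα : α ^ 2 - α + 1 = 0) : α⁻¹ = 1 - α := by
  rw [inv_eq_of_mul_eq_one_right]
  linear_combination -hα

lemma ne_neg_one_of_sq_sub_add_one_eq_zero (h3 : (3 : F) ≠ 0) (hα : α ^ 2 - α + 1 = 0) :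
    α ≠ -1 := by
  rintro rfl
  exact h3 (by linear_combination hα)

lemma inv_ne_self_of_sq_sub_add_one_eq_zero (h3 : (3 : F) ≠ 0) (hα : α ^ 2 - α + 1 = 0) :
    α⁻¹ ≠ α := by
  intro h
  have hsq : α * α = 1 := by
    nth_rewrite 2 [← h]
    exact mul_inv_cancel₀ (ne_zero_of_sq_sub_add_one_eq_zero hα)
  exact ne_neg_one_of_sq_sub_add_one_eq_zero h3 hα (by linear_combination (α + 1) * hα - α * hsq)

lemma setOf_pow_four_add_self_eq_zero (hα : α ^ 2 - α + 1 = 0) :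
    {x : F | x ^ 4 + x = 0} = {0, -1, α, α⁻¹} := by
  ext x
  have hfactor : x ^ 4 + x = x * (x + 1) * ((x - α) * (x - α⁻¹)) := by
    rw [inv_eq_one_sub_of_sq_sub_add_one_eq_zero hα]
    linear_combination x * (x + 1) * hα
  rw [Set.mem_ofPred_eq, hfactor]
  simp only [Set.mem_insert_iff, Set.mem_singleton_iff, mul_eq_zero, sub_eq_zero,
    add_eq_zero_iff_eq_neg, or_assoc]

lemma ncard_zero_neg_one_self_inv (h3 : (3 : F) ≠ 0) (hα : α ^ 2 - α + 1 = 0) :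
    ({0, -1, α, α⁻¹} : Set F).ncard = 4 := by
  have h0 := ne_zero_of_sq_sub_add_one_eq_zero hα
  have h1 := ne_neg_one_of_sq_sub_add_one_eq_zero h3 hα
  have hinv1 : α⁻¹ ≠ -1 := by rwa [Ne, inv_eq_iff_eq_inv, inv_neg_one]
  rw [Set.ncard_insert_of_notMem, Set.ncard_insert_of_notMem,
    Set.ncard_pair (inv_ne_self_of_sq_sub_add_one_eq_zero h3 hα).symm]
  · simp [h1.symm, hinv1.symm]
  · simp [h0.symm, (inv_ne_zero h0).symm]

end

theorem rank1_case1_zero_set_general (F : Type*) [Field F] [CharZero F]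
    (α : F) (hα : α ^ 2 - α + 1 = 0) :
    {p : F × F × F |
      p.1 ^ 3 - p.1 * p.2.1 = 0 ∧
      p.1 ^ 2 * p.2.1 - p.1 * p.2.2 = 0 ∧
      p.1 ^ 2 * p.2.2 + p.1 ^ 2 = 0 ∧
      p.1 * p.2.1 ^ 2 - p.2.1 * p.2.2 = 0 ∧
      p.2.1 ^ 3 + p.1 * p.2.1 = 0 ∧
      p.2.1 ^ 2 * p.2.2 + p.2.1 ^ 2 = 0 ∧
      p.1 * p.2.2 ^ 2 + p.1 * p.2.2 = 0 ∧
      p.2.1 * p.2.2 ^ 2 + p.2.1 * p.2.2 = 0 ∧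
      p.2.2 ^ 3 + p.2.2 ^ 2 = 0} =
    {(0, 0, 0), (0, 0, -1), (-1, 1, -1), (α, α ^ 2, -1), (α⁻¹, (α⁻¹) ^ 2, -1)} ∧
    ({(0, 0, 0), (0, 0, -1), (-1, 1, -1), (α, α ^ 2, -1), (α⁻¹, (α⁻¹) ^ 2, -1)}
      : Set (F × F × F)).ncard = 5 := by
  set f : F → F × F × F := fun x => (x, x ^ 2, -1)
  have hpoints : insert (0, 0, 0) (f '' {0, -1, α, α⁻¹}) =
      ({(0, 0, 0), (0, 0, -1), (-1, 1, -1), (α, α ^ 2, -1), (α⁻¹, (α⁻¹) ^ 2, -1)} :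
        Set (F × F × F)) := by
    simp only [f, Set.image_insert_eq, Set.image_singleton]
    norm_num
  refine ⟨by rw [setOf_rank1_equations, setOf_pow_four_add_self_eq_zero hα, hpoints], ?_⟩
  rw [← hpoints, Set.ncard_insert_of_notMem (by simp [f]),
    Set.ncard_image_of_injective _ fun x y h => congrArg Prod.fst h,
    ncard_zero_neg_one_self_inv three_ne_zero hα]

/-- Rank 1, case 1: the zero set of the nine polynomials is exactly 5 points. -/
theorem rank1_case1_zero_set (F : Type*) [Field F] [IsAlgClosed F] [CharZero F]
    (α : F) (hα : α ^ 2 - α + 1 = 0) :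
    {p : F × F × F |
      p.1 ^ 3 - p.1 * p.2.1 = 0 ∧
      p.1 ^ 2 * p.2.1 - p.1 * p.2.2 = 0 ∧
      p.1 ^ 2 * p.2.2 + p.1 ^ 2 = 0 ∧
      p.1 * p.2.1 ^ 2 - p.2.1 * p.2.2 = 0 ∧
      p.2.1 ^ 3 + p.1 * p.2.1 = 0 ∧
      p.2.1 ^ 2 * p.2.2 + p.2.1 ^ 2 = 0 ∧
      p.1 * p.2.2 ^ 2 + p.1 * p.2.2 = 0 ∧
      p.2.1 * p.2.2 ^ 2 + p.2.1 * p.2.2 = 0 ∧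
      p.2.2 ^ 3 + p.2.2 ^ 2 = 0} =
    {(0, 0, 0), (0, 0, -1), (-1, 1, -1), (α, α ^ 2, -1), (α⁻¹, (α⁻¹) ^ 2, -1)} ∧
    ({(0, 0, 0), (0, 0, -1), (-1, 1, -1), (α, α ^ 2, -1), (α⁻¹, (α⁻¹) ^ 2, -1)}
      : Set (F × F × F)).ncard = 5 :=
  rank1_case1_zero_set_general F α hα
end

section
/- Let F be a field of characteristic 0. The ideal of F[a,b,c] generated by a³−ab, a²b−ac, a²c+a², ab²−bc, b³+ab, b²c+b², ac²+ac, bc²+bc, c³+c² contains the polynomials b²−ca, cb+a², a(a²−b), a(ab−c), a²(c+1), ac(c+1), and c²(c+1). -/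
/-!
Each of the seven polynomials is an explicit combination of the nine cubics with coefficients
polynomial in `a, b, c` and integer constants, so the inclusion holds for arbitrary elements of
any commutative ring. Five of them are generators up to factoring; writing `g₁, …, g₉` for the
cubics in order, the other two are `b² - ca = b² g₁ + (1 - ab) g₂ - b g₃ + b g₄ + g₆` and
`cb + a² = -b g₁ + a g₂ + g₃ - g₄`.
-/

open MvPolynomial

namespace Rank1CaseOne

variable {R : Type*} [CommRing R] (a b c : R)

def generators : Fin 9 → R :=
  ![a ^ 3 - a * b, a ^ 2 * b - a * c, a ^ 2 * c + a ^ 2, a * b ^ 2 - b * c, b ^ 3 + a * b,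
    b ^ 2 * c + b ^ 2, a * c ^ 2 + a * c, b * c ^ 2 + b * c, c ^ 3 + c ^ 2]

theorem range_generators :
    Set.range (generators a b c) =
      {a ^ 3 - a * b, a ^ 2 * b - a * c, a ^ 2 * c + a ^ 2, a * b ^ 2 - b * c, b ^ 3 + a * b,
        b ^ 2 * c + b ^ 2, a * c ^ 2 + a * c, b * c ^ 2 + b * c, c ^ 3 + c ^ 2} := by
  simp only [generators, Matrix.range_cons, Matrix.range_empty, Set.union_empty,
    Set.singleton_union]

theorem mem_span_generators_of_sum_eq {p : R} (coeff : Fin 9 → R)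
    (h : ∑ i, coeff i * generators a b c i = p) :
    p ∈ Ideal.span (Set.range (generators a b c)) :=
  Ideal.mem_span_range_iff_exists_fun.2 ⟨coeff, h⟩

theorem groebnerBasis_subset_span_generators :
    {b ^ 2 - c * a, c * b + a ^ 2, a * (a ^ 2 - b), a * (a * b - c), a ^ 2 * (c + 1),
        a * c * (c + 1), c ^ 2 * (c + 1)} ⊆
      (Ideal.span (Set.range (generators a b c)) : Set R) := by
  rintro p (rfl | rfl | rfl | rfl | rfl | rfl | rfl)
  · exact mem_span_generators_of_sum_eq a b c ![b ^ 2, 1 - a * b, -b, b, 0, 1, 0, 0, 0]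
      (by simp only [generators, Fin.sum_univ_succ, Fin.sum_univ_zero, Matrix.cons_val_zero,
        Matrix.cons_val_succ]; ring)
  · exact mem_span_generators_of_sum_eq a b c ![-b, a, 1, -1, 0, 0, 0, 0, 0]
      (by simp only [generators, Fin.sum_univ_succ, Fin.sum_univ_zero, Matrix.cons_val_zero,
        Matrix.cons_val_succ]; ring)
  · exact Ideal.subset_span ⟨0, by simp only [generators, Matrix.cons_val]; ring⟩
  · exact Ideal.subset_span ⟨1, by simp only [generators, Matrix.cons_val]; ring⟩
  · exact Ideal.subset_span ⟨2, by simp only [generators, Matrix.cons_val]; ring⟩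
  · exact Ideal.subset_span ⟨6, by simp only [generators, Matrix.cons_val]; ring⟩
  · exact Ideal.subset_span ⟨8, by simp only [generators, Matrix.cons_val]; ring⟩

end Rank1CaseOne

theorem rank1_case1_groebner_membership_general (F : Type*) [Field F] :
    ∀ p ∈ ({(X 1) ^ 2 - X 2 * X 0,
            X 2 * X 1 + (X 0) ^ 2,
            X 0 * ((X 0) ^ 2 - X 1),
            X 0 * (X 0 * X 1 - X 2),
            (X 0) ^ 2 * (X 2 + 1),
            X 0 * X 2 * (X 2 + 1),
            (X 2) ^ 2 * (X 2 + 1)} : Set (MvPolynomial (Fin 3) F)),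
      p ∈ Ideal.span ({(X 0) ^ 3 - X 0 * X 1,
            (X 0) ^ 2 * X 1 - X 0 * X 2,
            (X 0) ^ 2 * X 2 + (X 0) ^ 2,
            X 0 * (X 1) ^ 2 - X 1 * X 2,
            (X 1) ^ 3 + X 0 * X 1,
            (X 1) ^ 2 * X 2 + (X 1) ^ 2,
            X 0 * (X 2) ^ 2 + X 0 * X 2,
            X 1 * (X 2) ^ 2 + X 1 * X 2,
            (X 2) ^ 3 + (X 2) ^ 2} : Set (MvPolynomial (Fin 3) F)) := by
  rw [← Rank1CaseOne.range_generators]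
  exact Rank1CaseOne.groebnerBasis_subset_span_generators (X 0) (X 1) (X 2)

/-- The Gröbner basis elements belong to the ideal generated by the nine polynomials. -/
theorem rank1_case1_groebner_membership (F : Type*) [Field F] [CharZero F] :
    ∀ p ∈ ({(X 1) ^ 2 - X 2 * X 0,
            X 2 * X 1 + (X 0) ^ 2,
            X 0 * ((X 0) ^ 2 - X 1),
            X 0 * (X 0 * X 1 - X 2),
            (X 0) ^ 2 * (X 2 + 1),
            X 0 * X 2 * (X 2 + 1),
            (X 2) ^ 2 * (X 2 + 1)} : Set (MvPolynomial (Fin 3) F)),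
      p ∈ Ideal.span ({(X 0) ^ 3 - X 0 * X 1,
            (X 0) ^ 2 * X 1 - X 0 * X 2,
            (X 0) ^ 2 * X 2 + (X 0) ^ 2,
            X 0 * (X 1) ^ 2 - X 1 * X 2,
            (X 1) ^ 3 + X 0 * X 1,
            (X 1) ^ 2 * X 2 + (X 1) ^ 2,
            X 0 * (X 2) ^ 2 + X 0 * X 2,
            X 1 * (X 2) ^ 2 + X 1 * X 2,
            (X 2) ^ 3 + (X 2) ^ 2} : Set (MvPolynomial (Fin 3) F)) :=
  rank1_case1_groebner_membership_general F
end

section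
/- Let F be a field of characteristic 0. The common zero set in F³ of the polynomials { ac, a³(b+1), a²b(b+1), ab²(b+1), b²c(b+1), bc²(b+1), (b+1)c³ } in the variables a,b,c is the union of the three lines {(a,−1,0) : a ∈ F} ∪ {(0,b,0) : b ∈ F} ∪ {(0,−1,c) : c ∈ F}. -/
/-- Rank 2, case 2: the zero set of the seven polynomials is the union of three lines. -/
theorem rank2_case2_zero_set (F : Type*) [Field F] [CharZero F] :
    {p : F × F × F |
      p.1 * p.2.2 = 0 ∧
      p.1 ^ 3 * (p.2.1 + 1) = 0 ∧
      p.1 ^ 2 * p.2.1 * (p.2.1 + 1) = 0 ∧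
      p.1 * p.2.1 ^ 2 * (p.2.1 + 1) = 0 ∧
      p.2.1 ^ 2 * p.2.2 * (p.2.1 + 1) = 0 ∧
      p.2.1 * p.2.2 ^ 2 * (p.2.1 + 1) = 0 ∧
      (p.2.1 + 1) * p.2.2 ^ 3 = 0} =
    {p : F × F × F | ∃ a : F, p = (a, -1, 0)} ∪
    {p : F × F × F | ∃ b : F, p = (0, b, 0)} ∪
    {p : F × F × F | ∃ c : F, p = (0, -1, c)} := by
  ext ⟨a, b, c⟩
  simp only [Set.mem_setOf_eq, Set.mem_union, Prod.mk.injEq]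
  constructor
  · rintro ⟨h1, h2, h3, h4, h5, h6, h7⟩
    by_cases hb : b + 1 = 0
    · have hb' : b = -1 := eq_neg_of_add_eq_zero_left hb
      rcases mul_eq_zero.mp h1 with ha | hc
      · right; exact ⟨c, ha, hb', rfl⟩
      · left; left; exact ⟨a, rfl, hb', hc⟩
    · have ha : a = 0 := by
        have := mul_eq_zero.mp h2
        rcases this with h | h
        · exact pow_eq_zero_iff (n := 3) (by norm_num) |>.mp h
        · exact absurd h hb
      have hc : c = 0 := by
        have := mul_eq_zero.mp h7
        rcases this with h | h
        · exact absurd h hb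
        · exact pow_eq_zero_iff (n := 3) (by norm_num) |>.mp h
      left; right; exact ⟨b, ha, rfl, hc⟩
  · rintro ((⟨x, rfl, rfl, rfl⟩ | ⟨x, rfl, rfl, rfl⟩) | ⟨x, rfl, rfl, rfl⟩) <;>
      norm_num
end

section
/- Let F be a field of characteristic 0 and consider the 5×5 matrix B over F[a,b,c,d] with rows [0, a²c+acd, abc+ad²+ac, abd+ad, b²d+bd], [−d, c³+ac−cd, c²d+bc, acd+cd², bcd+d³], [0, a³+abc, a²b+abd+a², ab²+ab, b³+b²], [−ad, −a, −ac, 0, 0], [cd, ac²−bc, acd+c², a²d+bcd+cd, abd+bd²+d²]. Then det(B) = −a²d²(ad−bc)²(ad−bc−b−c−1)(ad−bc−c+α(b+1))(ad−bc−c+α⁻¹(b+1)), where α and α⁻¹ are the two roots of x²−x+1 in F (assume they exist in F). -/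
/-!
Over any commutative ring, expanding along the first column gives
`det B = -a²d²(ad - bc)²(ad - bc - b - c - 1)(u² + uv + v²)` with `u = ad - bc - c`, `v = b + 1`.
Since `α + α⁻¹ = 1` and `α α⁻¹ = 1`, the binary form `u² + uv + v²` splits as `(u + αv)(u + α⁻¹v)`.
-/

section

variable {R : Type*} [CommRing R]

def matrixB (a b c d : R) : Matrix (Fin 5) (Fin 5) R :=
  !![0, a^2*c + a*c*d, a*b*c + a*d^2 + a*c, a*b*d + a*d, b^2*d + b*d;
     -d, c^3 + a*c - c*d, c^2*d + b*c, a*c*d + c*d^2, b*c*d + d^3;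
     0, a^3 + a*b*c, a^2*b + a*b*d + a^2, a*b^2 + a*b, b^3 + b^2;
     -(a*d), -a, -(a*c), 0, 0;
     c*d, a*c^2 - b*c, a*c*d + c^2, a^2*d + b*c*d + c*d, a*b*d + b*d^2 + d^2]

theorem det_matrixB (a b c d : R) :
    (matrixB a b c d).det = -(a^2) * d^2 * (a*d - b*c)^2 * (a*d - b*c - b - c - 1) *
      ((a*d - b*c - c)^2 + (a*d - b*c - c) * (b + 1) + (b + 1)^2) := by
  simp [Matrix.det_succ_column_zero, Fin.sum_univ_succ, matrixB, Fin.succAbove]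
  ring

end

theorem sq_add_mul_add_sq_eq_mul {K : Type*} [Field K] {α : K} (hα : α ^ 2 - α + 1 = 0)
    (x y : K) : x^2 + x*y + y^2 = (x + α*y) * (x + α⁻¹*y) := by
  have hα_inv : α⁻¹ = 1 - α := inv_eq_of_mul_eq_one_right (by linear_combination -hα)
  rw [hα_inv]
  linear_combination y^2 * hα

theorem detB_factorization_general (F : Type*) [Field F]
    (α : F) (hα : α ^ 2 - α + 1 = 0) (a b c d : F) :
    Matrix.det
      !![0, a^2*c + a*c*d, a*b*c + a*d^2 + a*c, a*b*d + a*d, b^2*d + b*d;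
         -d, c^3 + a*c - c*d, c^2*d + b*c, a*c*d + c*d^2, b*c*d + d^3;
         0, a^3 + a*b*c, a^2*b + a*b*d + a^2, a*b^2 + a*b, b^3 + b^2;
         -(a*d), -a, -(a*c), 0, 0;
         c*d, a*c^2 - b*c, a*c*d + c^2, a^2*d + b*c*d + c*d, a*b*d + b*d^2 + d^2] =
    -(a^2) * d^2 * (a*d - b*c)^2 * (a*d - b*c - b - c - 1) *
      (a*d - b*c - c + α * (b + 1)) * (a*d - b*c - c + α⁻¹ * (b + 1)) := by
  change (matrixB a b c d).det = _
  rw [det_matrixB, sq_add_mul_add_sq_eq_mul hα]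
  ring

/-- The determinant of the block `B` factors as stated, where `α` and `α⁻¹` are the two roots
of `x² - x + 1`. -/
theorem detB_factorization (F : Type*) [Field F] [CharZero F]
    (α : F) (hα : α ^ 2 - α + 1 = 0) (a b c d : F) :
    Matrix.det
      !![0, a^2*c + a*c*d, a*b*c + a*d^2 + a*c, a*b*d + a*d, b^2*d + b*d;
         -d, c^3 + a*c - c*d, c^2*d + b*c, a*c*d + c*d^2, b*c*d + d^3;
         0, a^3 + a*b*c, a^2*b + a*b*d + a^2, a*b^2 + a*b, b^3 + b^2;
         -(a*d), -a, -(a*c), 0, 0;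
         c*d, a*c^2 - b*c, a*c*d + c^2, a^2*d + b*c*d + c*d, a*b*d + b*d^2 + d^2] =
    -(a^2) * d^2 * (a*d - b*c)^2 * (a*d - b*c - b - c - 1) *
      (a*d - b*c - c + α * (b + 1)) * (a*d - b*c - c + α⁻¹ * (b + 1)) :=
  detB_factorization_general F α hα a b c d
end

section
/- Let F be a field of characteristic 0. The matrix B of the previous statement (rows [0, a²c+acd, abc+ad²+ac, abd+ad, b²d+bd], [−d, c³+ac−cd, c²d+bc, acd+cd², bcd+d³], [0, a³+abc, a²b+abd+a², ab²+ab, b³+b²], [−ad, −a, −ac, 0, 0], [cd, ac²−bc, acd+c², a²d+bcd+cd, abd+bd²+d²], specialized at (a,b,c,d) ∈ F⁴) is the zero matrix if and only if (a,b,c,d) = (0,0,0,0) or (a,b,c,d) = (0,−1,0,0). -/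
theorem B_eq_zero_iff_general (F : Type*) [Field F] (a b c d : F) :
    (!![0, a^2*c + a*c*d, a*b*c + a*d^2 + a*c, a*b*d + a*d, b^2*d + b*d;
        -d, c^3 + a*c - c*d, c^2*d + b*c, a*c*d + c*d^2, b*c*d + d^3;
        0, a^3 + a*b*c, a^2*b + a*b*d + a^2, a*b^2 + a*b, b^3 + b^2;
        -(a*d), -a, -(a*c), 0, 0;
        c*d, a*c^2 - b*c, a*c*d + c^2, a^2*d + b*c*d + c*d, a*b*d + b*d^2 + d^2]
      : Matrix (Fin 5) (Fin 5) F) = 0 ↔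
    (a, b, c, d) = (0, 0, 0, 0) ∨ (a, b, c, d) = (0, -1, 0, 0) := by
  constructor
  · intro h
    have entry (i j : Fin 5) := congr_fun₂ h i j
    have ha : a = 0 := by simpa using entry 3 1
    have hd : d = 0 := by simpa using entry 1 0
    have hc : c = 0 := by simpa [ha, hd] using entry 1 1
    have hb : b ^ 2 * (b + 1) = 0 := by
      linear_combination (by simpa using entry 2 4 : b ^ 3 + b ^ 2 = 0)
    simpa [ha, hc, hd, add_eq_zero_iff_eq_neg] using hb
  · rintro (h | h) <;>
      obtain ⟨rfl, rfl, rfl, rfl⟩ : a = _ ∧ b = _ ∧ c = _ ∧ d = _ := by simpa using h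
    all_goals ext i j; fin_cases i <;> fin_cases j <;> norm_num

/-- The block `B` vanishes if and only if `(a,b,c,d) = (0,0,0,0)` or `(0,-1,0,0)`. -/
theorem B_eq_zero_iff (F : Type*) [Field F] [CharZero F] (a b c d : F) :
    (!![0, a^2*c + a*c*d, a*b*c + a*d^2 + a*c, a*b*d + a*d, b^2*d + b*d;
        -d, c^3 + a*c - c*d, c^2*d + b*c, a*c*d + c*d^2, b*c*d + d^3;
        0, a^3 + a*b*c, a^2*b + a*b*d + a^2, a*b^2 + a*b, b^3 + b^2;
        -(a*d), -a, -(a*c), 0, 0;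
        c*d, a*c^2 - b*c, a*c*d + c^2, a^2*d + b*c*d + c*d, a*b*d + b*d^2 + d^2]
      : Matrix (Fin 5) (Fin 5) F) = 0 ↔
    (a, b, c, d) = (0, 0, 0, 0) ∨ (a, b, c, d) = (0, -1, 0, 0) :=
  B_eq_zero_iff_general F a b c d
end

section
/- Let F be an algebraically closed field of characteristic 0. The common zero set in F³ of the polynomials a²(a+1), ba(a+1), ca(a+1), b²(a+1), c²(a+1), b(b²+c), b(bc+a), c(bc+a), c(c²+b) equals {(0,0,0), (−1,0,0), (−1,−1,−1), (−1,α,α⁻¹), (−1,α⁻¹,α)}, where α and α⁻¹ are the two roots of x²−x+1. -/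
/-! Off the plane `a = -1` the equations `a²(a+1) = b²(a+1) = c²(a+1) = 0` force the origin. On it
the first five equations vanish, and the last four say `b = c = 0`, or `bc = 1` and `b² = -c`,
i.e. `c = b⁻¹` with `b³ = -1`; the cube roots of `-1` are `-1` and the roots `α`, `α⁻¹ = 1 - α`
of `x² - x + 1`. -/

section

variable {F : Type*} [Field F]

theorem inv_eq_one_sub_of_sq_sub_add_one {α : F} (hα : α ^ 2 - α + 1 = 0) : α⁻¹ = 1 - α :=
  inv_eq_of_mul_eq_one_right (by linear_combination -hα)

theorem sq_sub_add_one_eq_zero_iff {α : F} (hα : α ^ 2 - α + 1 = 0) {x : F} :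
    x ^ 2 - x + 1 = 0 ↔ x = α ∨ x = α⁻¹ := by
  rw [inv_eq_one_sub_of_sq_sub_add_one hα, ← sub_eq_zero (a := x), ← sub_eq_zero (a := x),
    ← mul_eq_zero]
  constructor <;> intro h
  · linear_combination h - hα
  · linear_combination h + hα

theorem inv_sq_sub_inv_add_one {α : F} (hα : α ^ 2 - α + 1 = 0) : α⁻¹ ^ 2 - α⁻¹ + 1 = 0 := by
  rw [inv_eq_one_sub_of_sq_sub_add_one hα]
  linear_combination hα

theorem pow_three_eq_neg_one_iff {x : F} : x ^ 3 = -1 ↔ x = -1 ∨ x ^ 2 - x + 1 = 0 := by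
  have h : x ^ 3 - -1 = (x - -1) * (x ^ 2 - x + 1) := by ring
  rw [← sub_eq_zero, h, mul_eq_zero, sub_eq_zero]

theorem cubic_system_inv_of_sq_sub_add_one {β : F} (hβ : β ^ 2 - β + 1 = 0) :
    β * (β ^ 2 + β⁻¹) = 0 ∧ β * (β * β⁻¹ - 1) = 0 ∧ β⁻¹ * (β * β⁻¹ - 1) = 0 ∧
      β⁻¹ * (β⁻¹ ^ 2 + β) = 0 := by
  have hβ0 : β ≠ 0 := by rintro rfl; norm_num at hβ
  rw [mul_inv_cancel₀ hβ0, inv_eq_one_sub_of_sq_sub_add_one hβ]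
  refine ⟨?_, by ring, by ring, ?_⟩
  · linear_combination β * hβ
  · linear_combination (1 - β) * hβ

theorem cubic_system_iff {α : F} (hα : α ^ 2 - α + 1 = 0) {b c : F} :
    (b * (b ^ 2 + c) = 0 ∧ b * (b * c - 1) = 0 ∧ c * (b * c - 1) = 0 ∧ c * (c ^ 2 + b) = 0) ↔
      (b = 0 ∧ c = 0) ∨ (b = -1 ∧ c = -1) ∨ (b = α ∧ c = α⁻¹) ∨ (b = α⁻¹ ∧ c = α) := by
  constructor
  · rintro ⟨h₁, h₂, h₃, -⟩
    by_cases hb : b = 0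
    · subst hb
      exact .inl ⟨rfl, by linear_combination -h₃⟩
    have hbc : b * c = 1 := sub_eq_zero.mp <| (mul_eq_zero.mp h₂).resolve_left hb
    have hb3 : b ^ 3 = -1 := by linear_combination h₁ - hbc
    obtain rfl : c = b⁻¹ := eq_inv_of_mul_eq_one_right hbc
    rcases pow_three_eq_neg_one_iff.mp hb3 with rfl | hb
    · exact .inr <| .inl ⟨rfl, by norm_num⟩
    · rcases (sq_sub_add_one_eq_zero_iff hα).mp hb with rfl | rfl
      · exact .inr <| .inr <| .inl ⟨rfl, rfl⟩
      · exact .inr <| .inr <| .inr ⟨rfl, inv_inv α⟩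
  · rintro (⟨rfl, rfl⟩ | ⟨rfl, rfl⟩ | ⟨rfl, rfl⟩ | ⟨rfl, rfl⟩)
    · norm_num
    · norm_num
    · exact cubic_system_inv_of_sq_sub_add_one hα
    -- the system is symmetric in `b`, `c`, and `α⁻¹` is again a root of `x² - x + 1`
    · simpa [and_comm, and_assoc, mul_comm] using
        cubic_system_inv_of_sq_sub_add_one (inv_sq_sub_inv_add_one hα)

end

theorem rank3_case1_zero_set_general (F : Type*) [Field F]
    (α : F) (hα : α ^ 2 - α + 1 = 0) :
    {p : F × F × F |
      p.1 ^ 2 * (p.1 + 1) = 0 ∧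
      p.2.1 * p.1 * (p.1 + 1) = 0 ∧
      p.2.2 * p.1 * (p.1 + 1) = 0 ∧
      p.2.1 ^ 2 * (p.1 + 1) = 0 ∧
      p.2.2 ^ 2 * (p.1 + 1) = 0 ∧
      p.2.1 * (p.2.1 ^ 2 + p.2.2) = 0 ∧
      p.2.1 * (p.2.1 * p.2.2 + p.1) = 0 ∧
      p.2.2 * (p.2.1 * p.2.2 + p.1) = 0 ∧
      p.2.2 * (p.2.2 ^ 2 + p.2.1) = 0} =
    {(0, 0, 0), (-1, 0, 0), (-1, -1, -1), (-1, α, α⁻¹), (-1, α⁻¹, α)} := by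
  ext ⟨a, b, c⟩
  simp only [Set.mem_ofPred_eq, Set.mem_insert_iff, Set.mem_singleton_iff, Prod.mk.injEq]
  by_cases ha : a + 1 = 0
  · obtain rfl : a = -1 := eq_neg_of_add_eq_zero_left ha
    simp only [ha, mul_zero, true_and, ← sub_eq_add_neg, cubic_system_iff hα]
    norm_num
  · have ha' : a ≠ -1 := fun h => ha (by rw [h]; norm_num)
    simp only [ha', false_and, or_false]
    constructor
    · rintro ⟨h₁, -, -, h₄, h₅, -⟩
      simp_all [pow_eq_zero_iff]
    · rintro ⟨rfl, rfl, rfl⟩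
      norm_num

/-- Rank 3, case 1: the common zero set of the nine polynomials is exactly five points. -/
theorem rank3_case1_zero_set (F : Type*) [Field F] [IsAlgClosed F] [CharZero F]
    (α : F) (hα : α ^ 2 - α + 1 = 0) :
    {p : F × F × F |
      p.1 ^ 2 * (p.1 + 1) = 0 ∧
      p.2.1 * p.1 * (p.1 + 1) = 0 ∧
      p.2.2 * p.1 * (p.1 + 1) = 0 ∧
      p.2.1 ^ 2 * (p.1 + 1) = 0 ∧
      p.2.2 ^ 2 * (p.1 + 1) = 0 ∧
      p.2.1 * (p.2.1 ^ 2 + p.2.2) = 0 ∧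
      p.2.1 * (p.2.1 * p.2.2 + p.1) = 0 ∧
      p.2.2 * (p.2.1 * p.2.2 + p.1) = 0 ∧
      p.2.2 * (p.2.2 ^ 2 + p.2.1) = 0} =
    {(0, 0, 0), (-1, 0, 0), (-1, -1, -1), (-1, α, α⁻¹), (-1, α⁻¹, α)} :=
  rank3_case1_zero_set_general F α hα
end
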